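/- For every ε > 0 and ℓ > 0 there exists a constant C = C(ε,ℓ) > 0 such that for all α ∈ [0, 2-ε] and all u with u(ℓ)=0 and ∫₀^ℓ x^α|u'|² dx < ∞, one has ∫₀^ℓ |u|² dx ≤ C ∫₀^ℓ x^α |u'|² dx. -/

import Mathlib

/-!
For `x ∈ (0, ℓ)` write `u x = -∫ₓ^ℓ u'` and apply Cauchy–Schwarz with weight `t ^ α`:
`u(x)² ≤ (∫ₓ^ℓ t^(-α)) · ∫₀^ℓ t^α u'²`. With `δ = min ε (1/2)` and `α ≤ 2 - δ`, on `(0, ℓ]`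
we have `t^(-α) ≤ max 1 ℓ ^ 2 · t^(δ-2)`, so the first factor is at most
`max 1 ℓ ^ 2 · x^(δ-1) / (1 - δ)` uniformly in `α`; this is integrable on `(0, ℓ)` because `δ > 0`.
-/

open MeasureTheory Set

theorem abs_le_inv_add_mul_sq {w : ℝ} (hw : 0 < w) (g : ℝ) : |g| ≤ w⁻¹ + w * g ^ 2 := by
  have h : w⁻¹ + w * g ^ 2 - 2 * |g| = w⁻¹ * (1 - w * |g|) ^ 2 := by
    field_simp
    linear_combination (-w ^ 2) * sq_abs g
  nlinarith [abs_nonneg g, mul_nonneg (inv_nonneg.2 hw.le) (sq_nonneg (1 - w * |g|))]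

section WeightedCauchySchwarz

variable {α : Type*} [MeasurableSpace α] {μ : Measure α} {w g : α → ℝ}

theorem integrable_of_integrable_inv_of_integrable_mul_sq (hw : ∀ᵐ a ∂μ, 0 < w a)
    (hg : AEStronglyMeasurable g μ) (hw' : Integrable (fun a => (w a)⁻¹) μ)
    (hwg : Integrable (fun a => w a * g a ^ 2) μ) : Integrable g μ :=
  (hw'.add hwg).mono' hg <| hw.mono fun a ha => abs_le_inv_add_mul_sq ha (g a)

theorem sq_integral_le_integral_inv_mul_integral_mul_sq (hw : ∀ᵐ a ∂μ, 0 < w a)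
    (hw' : Integrable (fun a => (w a)⁻¹) μ) (hg : Integrable g μ)
    (hwg : Integrable (fun a => w a * g a ^ 2) μ) :
    (∫ a, g a ∂μ) ^ 2 ≤ (∫ a, (w a)⁻¹ ∂μ) * ∫ a, w a * g a ^ 2 ∂μ := by
  -- `s ↦ ∫ w⁻¹ (s - w g)²` is a nonnegative quadratic, so its discriminant is nonpositive.
  have hquad : ∀ s : ℝ, 0 ≤ (∫ a, (w a)⁻¹ ∂μ) * (s * s) + (-2 * ∫ a, g a ∂μ) * s
      + ∫ a, w a * g a ^ 2 ∂μ := by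
    intro s
    have hsq : ∀ᵐ a ∂μ, (w a)⁻¹ * (s - w a * g a) ^ 2
        = (w a)⁻¹ * (s * s) + (-2 * g a) * s + w a * g a ^ 2 := hw.mono fun a ha => by
      field_simp
      ring
    have h1 : Integrable (fun a => (w a)⁻¹ * (s * s)) μ := hw'.mul_const _
    have h2 : Integrable (fun a => -2 * g a * s) μ := (hg.const_mul _).mul_const _
    calc 0 ≤ ∫ a, (w a)⁻¹ * (s - w a * g a) ^ 2 ∂μ :=
          integral_nonneg_of_ae <| hw.mono fun a ha => by positivity
      _ = _ := by
        rw [integral_congr_ae hsq, integral_add (by exact h1.add h2) hwg, integral_add h1 h2,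
          integral_mul_const, integral_mul_const, integral_const_mul]
  have := discrim_le_zero hquad
  rw [discrim] at this
  nlinarith

end WeightedCauchySchwarz

theorem sq_sub_le_integral_inv_mul_integral_mul_sq_deriv {u w : ℝ → ℝ} {a b : ℝ} (hab : a ≤ b)
    (hu : ∀ t ∈ Icc a b, DifferentiableAt ℝ u t) (hw : ∀ t ∈ Ioo a b, 0 < w t)
    (hw' : IntegrableOn (fun t => (w t)⁻¹) (Ioo a b))
    (hwu : IntegrableOn (fun t => w t * deriv u t ^ 2) (Ioo a b)) :
    (u b - u a) ^ 2 ≤ (∫ t in Ioo a b, (w t)⁻¹) * ∫ t in Ioo a b, w t * deriv u t ^ 2 := by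
  have hw_ae : ∀ᵐ t ∂volume.restrict (Ioo a b), 0 < w t :=
    (ae_restrict_iff' measurableSet_Ioo).2 (ae_of_all _ hw)
  have hu' : IntegrableOn (deriv u) (Ioo a b) :=
    integrable_of_integrable_inv_of_integrable_mul_sq hw_ae
      (measurable_deriv u).aestronglyMeasurable hw' hwu
  have hftc : ∫ t in Ioo a b, deriv u t = u b - u a := by
    rw [← integral_Ioc_eq_integral_Ioo, ← intervalIntegral.integral_of_le hab]
    exact intervalIntegral.integral_deriv_eq_sub (fun t ht => hu t (uIcc_of_le hab ▸ ht))
      ((intervalIntegrable_iff_integrableOn_Ioo_of_le hab).2 hu')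
  rw [← hftc]
  exact sq_integral_le_integral_inv_mul_integral_mul_sq hw_ae hw' hu' hwu

theorem rpow_le_max_one_rpow {t ℓ γ p : ℝ} (ht : 0 ≤ t) (htℓ : t ≤ ℓ) (hγ : 0 ≤ γ)
    (hγp : γ ≤ p) : t ^ γ ≤ max 1 ℓ ^ p :=
  calc t ^ γ ≤ max 1 ℓ ^ γ := Real.rpow_le_rpow ht (htℓ.trans (le_max_right _ _)) hγ
    _ ≤ max 1 ℓ ^ p := Real.rpow_le_rpow_of_exponent_le (le_max_left _ _) hγp

theorem integrableOn_inv_rpow_Ioo {x ℓ α : ℝ} (hx : 0 < x) :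
    IntegrableOn (fun t : ℝ => (t ^ α)⁻¹) (Ioo x ℓ) := by
  refine (ContinuousOn.integrableOn_Icc fun t ht => ?_).mono_set Ioo_subset_Icc_self
  have ht0 : 0 < t := hx.trans_le ht.1
  exact ((Real.continuousAt_rpow_const t α (Or.inl ht0.ne')).inv₀
    (Real.rpow_pos_of_pos ht0 α).ne').continuousWithinAt

theorem integral_Ioo_inv_rpow_le {x ℓ α δ : ℝ} (hx : 0 < x) (hxℓ : x ≤ ℓ) (hα : 0 ≤ α)
    (hδ : 0 ≤ δ) (hδ1 : δ < 1) (hαδ : α ≤ 2 - δ) :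
    ∫ t in Ioo x ℓ, (t ^ α)⁻¹ ≤ max 1 ℓ ^ (2 : ℝ) * x ^ (δ - 1) / (1 - δ) := by
  have h0 : (0 : ℝ) ∉ uIcc x ℓ := by
    rw [uIcc_of_le hxℓ]
    exact fun h => hx.not_ge h.1
  have hint : IntegrableOn (fun t : ℝ => t ^ (δ - 2)) (Ioo x ℓ) :=
    (intervalIntegrable_iff_integrableOn_Ioo_of_le hxℓ).1
      (intervalIntegral.intervalIntegrable_rpow (Or.inr h0))
  have hpt : ∀ t ∈ Ioo x ℓ, (t ^ α)⁻¹ ≤ max 1 ℓ ^ (2 : ℝ) * t ^ (δ - 2) := by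
    rintro t ⟨hxt, htℓ⟩
    have ht : 0 < t := hx.trans hxt
    rw [← Real.rpow_neg ht.le, show -α = (2 - δ - α) + (δ - 2) by ring, Real.rpow_add ht]
    gcongr
    exact rpow_le_max_one_rpow ht.le htℓ.le (by linarith) (by linarith)
  calc ∫ t in Ioo x ℓ, (t ^ α)⁻¹ ≤ ∫ t in Ioo x ℓ, max 1 ℓ ^ (2 : ℝ) * t ^ (δ - 2) :=
        setIntegral_mono_on (integrableOn_inv_rpow_Ioo hx) (hint.const_mul _) measurableSet_Ioo hpt
    _ = max 1 ℓ ^ (2 : ℝ) * ((x ^ (δ - 1) - ℓ ^ (δ - 1)) / (1 - δ)) := by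
        rw [integral_const_mul, ← integral_Ioc_eq_integral_Ioo,
          ← intervalIntegral.integral_of_le hxℓ, integral_rpow (Or.inr ⟨by linarith, h0⟩)]
        congr 1
        rw [show δ - 2 + 1 = δ - 1 by ring, ← neg_div_neg_eq]
        ring_nf
    _ ≤ max 1 ℓ ^ (2 : ℝ) * x ^ (δ - 1) / (1 - δ) := by
        rw [mul_div_assoc]
        gcongr
        linarith [Real.rpow_nonneg (hx.le.trans hxℓ) (δ - 1)]

theorem integral_Ioo_rpow_sub_one {ℓ δ : ℝ} (hℓ : 0 ≤ ℓ) (hδ : 0 < δ) :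
    ∫ x in Ioo 0 ℓ, x ^ (δ - 1) = ℓ ^ δ / δ := by
  rw [← integral_Ioc_eq_integral_Ioo, ← intervalIntegral.integral_of_le hℓ,
    integral_rpow (Or.inl (by linarith)), sub_add_cancel, Real.zero_rpow hδ.ne', sub_zero]

theorem sq_le_rpow_mul_integral_rpow_mul_sq_deriv {u : ℝ → ℝ} {x ℓ α δ : ℝ}
    (hx : x ∈ Ioo 0 ℓ) (hα : 0 ≤ α) (hδ : 0 ≤ δ) (hδ1 : δ < 1) (hαδ : α ≤ 2 - δ)
    (hu : ∀ t ∈ Ioc 0 ℓ, DifferentiableAt ℝ u t) (huℓ : u ℓ = 0)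
    (hW : IntegrableOn (fun t => t ^ α * deriv u t ^ 2) (Ioo 0 ℓ)) :
    u x ^ 2 ≤ max 1 ℓ ^ (2 : ℝ) * x ^ (δ - 1) / (1 - δ) *
      ∫ t in Ioo 0 ℓ, t ^ α * deriv u t ^ 2 := by
  obtain ⟨hx, hxℓ⟩ := hx
  have hsub : Ioo x ℓ ⊆ Ioo 0 ℓ := Ioo_subset_Ioo_left hx.le
  have hW_nonneg : ∀ t ∈ Ioo 0 ℓ, 0 ≤ t ^ α * deriv u t ^ 2 := fun t ht =>
    mul_nonneg (Real.rpow_nonneg ht.1.le α) (sq_nonneg _)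
  have hCS := sq_sub_le_integral_inv_mul_integral_mul_sq_deriv (u := u) (w := (· ^ α))
    hxℓ.le (fun t ht => hu t ⟨hx.trans_le ht.1, ht.2⟩)
    (fun t ht => Real.rpow_pos_of_pos (hx.trans ht.1) α) (integrableOn_inv_rpow_Ioo hx)
    (hW.mono_set hsub)
  have hI : ∫ t in Ioo x ℓ, t ^ α * deriv u t ^ 2 ≤ ∫ t in Ioo 0 ℓ, t ^ α * deriv u t ^ 2 :=
    setIntegral_mono_set hW ((ae_restrict_iff' measurableSet_Ioo).2 (ae_of_all _ hW_nonneg))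
      hsub.eventuallyLE
  have hI_nonneg : 0 ≤ ∫ t in Ioo x ℓ, t ^ α * deriv u t ^ 2 :=
    setIntegral_nonneg measurableSet_Ioo fun t ht => hW_nonneg t (hsub ht)
  calc u x ^ 2 = (u ℓ - u x) ^ 2 := by rw [huℓ, zero_sub, neg_sq]
    _ ≤ _ := hCS
    _ ≤ _ := mul_le_mul (integral_Ioo_inv_rpow_le hx hxℓ.le hα hδ hδ1 hαδ) hI hI_nonneg
          (by positivity)

/-- Uniform (in `α`) weighted Poincaré inequality:
for every `ε > 0` and `ℓ > 0` there is `C = C(ε,ℓ) > 0` such that for all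
`α ∈ [0, 2-ε]` and all admissible `u` with `u ℓ = 0`,
`∫₀^ℓ u² ≤ C ∫₀^ℓ x^α (u')²`. -/
theorem weighted_poincare_uniform
    (ε ℓ : ℝ) (hε : 0 < ε) (hℓ : 0 < ℓ) :
    ∃ C : ℝ, 0 < C ∧
      ∀ α : ℝ, α ∈ Set.Icc (0:ℝ) (2 - ε) →
        ∀ u : ℝ → ℝ,
          (∀ x ∈ Set.Ioc (0:ℝ) ℓ, DifferentiableAt ℝ u x) →
          u ℓ = 0 →
          MeasureTheory.IntegrableOn (fun x => (u x)^2) (Set.Ioo 0 ℓ) →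
          MeasureTheory.IntegrableOn (fun x => x ^ α * (deriv u x)^2) (Set.Ioo 0 ℓ) →
          ∫ x in Set.Ioo (0:ℝ) ℓ, (u x)^2
            ≤ C * ∫ x in Set.Ioo (0:ℝ) ℓ, x ^ α * (deriv u x)^2 := by
  set δ := min ε (1 / 2)
  have hδ : 0 < δ := lt_min hε (by norm_num)
  have hδ1 : δ < 1 := (min_le_right _ _).trans_lt (by norm_num)
  set M := max 1 ℓ ^ (2 : ℝ)
  refine ⟨M / (1 - δ) * (ℓ ^ δ / δ), by positivity, ?_⟩
  rintro α ⟨hα, hαε⟩ u hu huℓ hu2 hW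
  have hαδ : α ≤ 2 - δ := hαε.trans (sub_le_sub_left (min_le_left _ _) 2)
  set I := ∫ x in Ioo 0 ℓ, x ^ α * deriv u x ^ 2
  have hpt : ∀ x ∈ Ioo 0 ℓ, u x ^ 2 ≤ M / (1 - δ) * I * x ^ (δ - 1) := fun x hx =>
    (sq_le_rpow_mul_integral_rpow_mul_sq_deriv hx hα hδ.le hδ1 hαδ hu huℓ hW).trans_eq
      (by ring)
  have hint : IntegrableOn (fun x : ℝ => x ^ (δ - 1)) (Ioo 0 ℓ) :=
    (intervalIntegrable_iff_integrableOn_Ioo_of_le hℓ.le).1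
      (intervalIntegral.intervalIntegrable_rpow' (by linarith))
  calc ∫ x in Ioo 0 ℓ, u x ^ 2 ≤ ∫ x in Ioo 0 ℓ, M / (1 - δ) * I * x ^ (δ - 1) :=
        setIntegral_mono_on hu2 (hint.const_mul _) measurableSet_Ioo hpt
    _ = M / (1 - δ) * (ℓ ^ δ / δ) * I := by
        rw [integral_const_mul, integral_Ioo_rpow_sub_one hℓ.le hδ]
        ring
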